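/- Let G be a finite abelian group, let φ : 𝒢̃ → 𝒢 be a G-cover of graphs, and let γ be a closed walk on 𝒢. Then for every integer j ≥ 0, the subsets NV_φ(γ) and NV_φ(γ^{(j)}) of G are equal. -/

import Mathlib

/-- A finite graph: each edge `e` has an initial vertex `init e` and a terminal
vertex `term e` (forming its plus direction `e⁺`; the minus direction is reversed). -/
structure FGraph where
  V : Type
  E : Type
  finV : Finite V
  finE : Finite E
  init : E → V
  term : E → V

namespace FGraph

/-- Initial vertex of a directed edge; `true` is the plus direction. -/
def dsrc (Γ : FGraph) (e : Γ.E) (s : Bool) : Γ.V := if s then Γ.init e else Γ.term e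

/-- Terminal vertex of a directed edge. -/
def ddst (Γ : FGraph) (e : Γ.E) (s : Bool) : Γ.V := if s then Γ.term e else Γ.init e

/-- `Γ.WalkFrom v ℓ w` : the list of directed edges `ℓ` is a walk from `v` to `w`. -/
def WalkFrom (Γ : FGraph) : Γ.V → List (Γ.E × Bool) → Γ.V → Prop
  | v, [], w => v = w
  | v, p :: rest, w => Γ.dsrc p.1 p.2 = v ∧ Γ.WalkFrom (Γ.ddst p.1 p.2) rest w

/-- The list of vertices `v₀, …, v_n` visited by a walk with edge list `ℓ` starting at `v`. -/
def vertList (Γ : FGraph) : Γ.V → List (Γ.E × Bool) → List Γ.V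
  | v, [] => [v]
  | v, p :: rest => v :: Γ.vertList (Γ.ddst p.1 p.2) rest

end FGraph

/-- A map of graphs: the endpoint set of the image of an edge is the image of its
endpoint set. -/
structure GraphMap (Γ₁ Γ₂ : FGraph) where
  mapV : Γ₁.V → Γ₂.V
  mapE : Γ₁.E → Γ₂.E
  endpoints : ∀ e : Γ₁.E,
    ({Γ₂.init (mapE e), Γ₂.term (mapE e)} : Set Γ₂.V) = mapV '' {Γ₁.init e, Γ₁.term e}

/-- An isomorphism of graphs. -/
structure GraphIso (Γ₁ Γ₂ : FGraph) extends GraphMap Γ₁ Γ₂ where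
  bijV : Function.Bijective mapV
  bijE : Function.Bijective mapE

/-- A `G`-cover of graphs `φ : T → B`: `G` acts on `T` (compatibly with endpoints,
preserving the chosen directions), `φ` is `G`-invariant and direction-preserving,
identifies `T/G` with `B` (it is surjective and `G` is transitive on all fibers),
and `G` acts freely on the edges of `T` as soon as `B` has an edge. -/
structure GCover (G : Type) [Group G] (T B : FGraph) where
  mapV : T.V → B.V
  mapE : T.E → B.E
  actV : G → T.V → T.V
  actE : G → T.E → T.E
  actV_one : ∀ v, actV 1 v = v
  actV_mul : ∀ g h v, actV (g * h) v = actV g (actV h v)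
  actE_one : ∀ e, actE 1 e = e
  actE_mul : ∀ g h e, actE (g * h) e = actE g (actE h e)
  act_init : ∀ g e, T.init (actE g e) = actV g (T.init e)
  act_term : ∀ g e, T.term (actE g e) = actV g (T.term e)
  map_init : ∀ e, B.init (mapE e) = mapV (T.init e)
  map_term : ∀ e, B.term (mapE e) = mapV (T.term e)
  map_actV : ∀ g v, mapV (actV g v) = mapV v
  map_actE : ∀ g e, mapE (actE g e) = mapE e
  surjV : Function.Surjective mapV
  surjE : Function.Surjective mapE
  transV : ∀ v w, mapV v = mapV w → ∃ g, actV g v = w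
  transE : ∀ e f, mapE e = mapE f → ∃ g, actE g e = f
  freeE : Nonempty B.E → ∀ g e, actE g e = e → g = 1

namespace GCover

variable {G : Type} [Group G] {T B : FGraph}

/-- The net voltage set `NV_φ(γ, w₀)` of a closed walk with edge list `ℓ` at a
base vertex `w₀` of the cover: the set of `g ∈ G` such that some lift of the walk
starting at `w₀` ends at `g·w₀`. -/
def NVset (φ : GCover G T B) (ℓ : List (B.E × Bool)) (w₀ : T.V) : Set G :=
  {g | ∃ ℓ' : List (T.E × Bool),
    ℓ'.map (fun p => (φ.mapE p.1, p.2)) = ℓ ∧ T.WalkFrom w₀ ℓ' (φ.actV g w₀)}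

/-- The net voltage class `NV_φ(γ)` of a closed walk `γ = (v₀, ℓ)`: the conjugacy
class in `G` of `NV_φ(γ, w₀)` for (any) `w₀` in the fiber over `v₀`. -/
def NVclass (φ : GCover G T B) (v₀ : B.V) (ℓ : List (B.E × Bool)) : Set (Set G) :=
  {S | ∃ w₀ : T.V, φ.mapV w₀ = v₀ ∧
    ∃ g : G, S = (fun h => g * h * g⁻¹) '' φ.NVset ℓ w₀}

end GCover

/-- A `(θ, τ)`-equivalence between two `G`-covers. -/
structure GCoverEquiv {G : Type} [Group G] {T₁ B₁ T₂ B₂ : FGraph}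
    (φ₁ : GCover G T₁ B₁) (φ₂ : GCover G T₂ B₂)
    (θ : GraphIso B₁ B₂) (τ : G ≃* G) where
  iso : GraphIso T₁ T₂
  commV : ∀ v, φ₂.mapV (iso.mapV v) = θ.mapV (φ₁.mapV v)
  commE : ∀ e, φ₂.mapE (iso.mapE e) = θ.mapE (φ₁.mapE e)
  equivV : ∀ (g : G) v, iso.mapV (φ₁.actV g v) = φ₂.actV (τ g) (iso.mapV v)
  equivE : ∀ (g : G) e, iso.mapE (φ₁.actE g e) = φ₂.actE (τ g) (iso.mapE e)

/-!
A lift of `a ++ b` from `w₀` to `g·w₀` splits as a lift `ℓ₁` of `a` from `w₀` to some `u` followed by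
a lift `ℓ₂` of `b` from `u` to `g·w₀`; then `ℓ₂` followed by the translate `g·ℓ₁` lifts `b ++ a` from
`u` to `g·u`. So every voltage of the walk is a voltage of its rotation, based at a different point
of the fiber; for abelian `G` the net voltage set does not depend on that point.
-/

namespace FGraph

variable {Γ : FGraph}

theorem walkFrom_append {a b : List (Γ.E × Bool)} {v w : Γ.V} :
    Γ.WalkFrom v (a ++ b) w ↔ ∃ u, Γ.WalkFrom v a u ∧ Γ.WalkFrom u b w := by
  induction a generalizing v with
  | nil => simp [WalkFrom]
  | cons p rest ih => simp only [List.cons_append, WalkFrom, ih, and_assoc, exists_and_left]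

theorem WalkFrom.unique {ℓ : List (Γ.E × Bool)} {v u u' : Γ.V}
    (h : Γ.WalkFrom v ℓ u) (h' : Γ.WalkFrom v ℓ u') : u = u' := by
  induction ℓ generalizing v with
  | nil => exact h.symm.trans h'
  | cons p rest ih => exact ih h.2 h'.2

end FGraph

namespace GCover

variable {G : Type} {T B : FGraph}

section Group

variable [Group G] (φ : GCover G T B)

def projEdges (ℓ : List (T.E × Bool)) : List (B.E × Bool) :=
  ℓ.map fun p => (φ.mapE p.1, p.2)

def actEdges (g : G) (ℓ : List (T.E × Bool)) : List (T.E × Bool) :=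
  ℓ.map fun p => (φ.actE g p.1, p.2)

theorem mapV_dsrc (e : T.E) (s : Bool) : φ.mapV (T.dsrc e s) = B.dsrc (φ.mapE e) s := by
  cases s <;> simp [FGraph.dsrc, φ.map_init, φ.map_term]

theorem mapV_ddst (e : T.E) (s : Bool) : φ.mapV (T.ddst e s) = B.ddst (φ.mapE e) s := by
  cases s <;> simp [FGraph.ddst, φ.map_init, φ.map_term]

theorem dsrc_actE (g : G) (e : T.E) (s : Bool) :
    T.dsrc (φ.actE g e) s = φ.actV g (T.dsrc e s) := by
  cases s <;> simp [FGraph.dsrc, φ.act_init, φ.act_term]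

theorem ddst_actE (g : G) (e : T.E) (s : Bool) :
    T.ddst (φ.actE g e) s = φ.actV g (T.ddst e s) := by
  cases s <;> simp [FGraph.ddst, φ.act_init, φ.act_term]

theorem walkFrom_projEdges {ℓ : List (T.E × Bool)} {w u : T.V} (h : T.WalkFrom w ℓ u) :
    B.WalkFrom (φ.mapV w) (φ.projEdges ℓ) (φ.mapV u) := by
  induction ℓ generalizing w with
  | nil => exact congrArg φ.mapV h
  | cons p rest ih =>
    obtain ⟨hsrc, hrest⟩ := h
    exact ⟨by rw [← mapV_dsrc, hsrc], by rw [← mapV_ddst]; exact ih hrest⟩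

theorem walkFrom_actEdges (g : G) {ℓ : List (T.E × Bool)} {w u : T.V} (h : T.WalkFrom w ℓ u) :
    T.WalkFrom (φ.actV g w) (φ.actEdges g ℓ) (φ.actV g u) := by
  induction ℓ generalizing w with
  | nil => exact congrArg (φ.actV g) h
  | cons p rest ih =>
    obtain ⟨hsrc, hrest⟩ := h
    exact ⟨by rw [dsrc_actE, hsrc], by rw [ddst_actE]; exact ih hrest⟩

@[simp]
theorem projEdges_actEdges (g : G) (ℓ : List (T.E × Bool)) :
    φ.projEdges (φ.actEdges g ℓ) = φ.projEdges ℓ := by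
  simp [projEdges, actEdges, φ.map_actE]

theorem conj_mem_NVset_actV {ℓ : List (B.E × Bool)} {w : T.V} {g : G} (hg : g ∈ φ.NVset ℓ w)
    (h : G) : h * g * h⁻¹ ∈ φ.NVset ℓ (φ.actV h w) := by
  obtain ⟨ℓ', hproj, hwalk⟩ := hg
  refine ⟨φ.actEdges h ℓ', (φ.projEdges_actEdges h ℓ').trans hproj, ?_⟩
  simpa [← φ.actV_mul] using φ.walkFrom_actEdges h hwalk

theorem exists_mem_NVset_append_swap {a b : List (B.E × Bool)} {v₀ v : B.V}
    (ha : B.WalkFrom v₀ a v) {w₀ : T.V} (hw₀ : φ.mapV w₀ = v₀) {g : G}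
    (hg : g ∈ φ.NVset (a ++ b) w₀) : ∃ u, φ.mapV u = v ∧ g ∈ φ.NVset (b ++ a) u := by
  obtain ⟨ℓ', hproj, hwalk⟩ := hg
  obtain ⟨ℓ₁, ℓ₂, rfl, hℓ₁, hℓ₂⟩ := List.map_eq_append_iff.mp hproj
  obtain ⟨u, hu₁, hu₂⟩ := FGraph.walkFrom_append.mp hwalk
  have hu : φ.mapV u = v := by
    have := φ.walkFrom_projEdges hu₁
    rw [projEdges, hℓ₁, hw₀] at this
    exact this.unique ha
  refine ⟨u, hu, ℓ₂ ++ φ.actEdges g ℓ₁, ?_, ?_⟩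
  · rw [List.map_append]
    change φ.projEdges ℓ₂ ++ φ.projEdges (φ.actEdges g ℓ₁) = b ++ a
    rw [projEdges_actEdges]
    exact congrArg₂ (· ++ ·) hℓ₂ hℓ₁
  · exact FGraph.walkFrom_append.mpr ⟨_, hu₂, φ.walkFrom_actEdges g hu₁⟩

end Group

section CommGroup

variable [CommGroup G] (φ : GCover G T B)

theorem NVset_subset_NVset_actV (ℓ : List (B.E × Bool)) (w : T.V) (h : G) :
    φ.NVset ℓ w ⊆ φ.NVset ℓ (φ.actV h w) := fun g hg => by
  simpa using φ.conj_mem_NVset_actV hg h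

theorem NVset_eq_of_mapV_eq (ℓ : List (B.E × Bool)) {w w' : T.V} (h : φ.mapV w = φ.mapV w') :
    φ.NVset ℓ w = φ.NVset ℓ w' := by
  obtain ⟨g, rfl⟩ := φ.transV w w' h
  refine (φ.NVset_subset_NVset_actV ℓ w g).antisymm ?_
  simpa [← φ.actV_mul, φ.actV_one] using φ.NVset_subset_NVset_actV ℓ (φ.actV g w) g⁻¹

theorem NVset_append_subset_NVset_append_swap {a b : List (B.E × Bool)} {v₀ v : B.V}
    (ha : B.WalkFrom v₀ a v) {w₀ w : T.V} (hw₀ : φ.mapV w₀ = v₀) (hw : φ.mapV w = v) :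
    φ.NVset (a ++ b) w₀ ⊆ φ.NVset (b ++ a) w := fun g hg => by
  obtain ⟨u, hu, hgu⟩ := φ.exists_mem_NVset_append_swap ha hw₀ hg
  rwa [φ.NVset_eq_of_mapV_eq _ (hu.trans hw.symm)] at hgu

end CommGroup

end GCover

theorem net_voltage_shift_general {G : Type} [CommGroup G] {T B : FGraph}
    (φ : GCover G T B) (v₀ : B.V) (ℓ : List (B.E × Bool))
    (hclosed : B.WalkFrom v₀ ℓ v₀) (j : ℕ) (vj : B.V)
    (hsplit : B.WalkFrom v₀ (ℓ.take (j % ℓ.length)) vj)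
    (w₀ wj : T.V) (hw₀ : φ.mapV w₀ = v₀) (hwj : φ.mapV wj = vj) :
    φ.NVset ℓ w₀ = φ.NVset (ℓ.drop (j % ℓ.length) ++ ℓ.take (j % ℓ.length)) wj := by
  generalize j % ℓ.length = k at hsplit ⊢
  rw [← List.take_append_drop k ℓ, FGraph.walkFrom_append] at hclosed
  obtain ⟨u, hu_take, hu_drop⟩ := hclosed
  obtain rfl := hu_take.unique hsplit
  conv_lhs => rw [← List.take_append_drop k ℓ]
  exact (φ.NVset_append_subset_NVset_append_swap hsplit hw₀ hwj).antisymm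
    (φ.NVset_append_subset_NVset_append_swap hu_drop hwj hw₀)

/-- **Lemma 2.13.** Let `G` be a finite abelian group, `φ` a `G`-cover, and `γ` a
closed walk with initial vertex `v₀` and (nonempty) edge list `ℓ` of length `n`.
For `j ≥ 0`, the shifted walk `γ^{(j)}` starts at the vertex `v_{j̄}` (`j̄ = j mod n`)
and has edge list `ℓ.drop j̄ ++ ℓ.take j̄`. Then `NV_φ(γ) = NV_φ(γ^{(j)})` as subsets
of `G` (for abelian `G` the net voltage set does not depend on the base vertex of
the fiber, so it is a well-defined subset of `G`). -/
theorem net_voltage_shift {G : Type} [CommGroup G] [Finite G] {T B : FGraph}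
    (φ : GCover G T B) (v₀ : B.V) (ℓ : List (B.E × Bool)) (hne : ℓ ≠ [])
    (hclosed : B.WalkFrom v₀ ℓ v₀) (j : ℕ) (vj : B.V)
    (hsplit : B.WalkFrom v₀ (ℓ.take (j % ℓ.length)) vj)
    (w₀ wj : T.V) (hw₀ : φ.mapV w₀ = v₀) (hwj : φ.mapV wj = vj) :
    φ.NVset ℓ w₀ = φ.NVset (ℓ.drop (j % ℓ.length) ++ ℓ.take (j % ℓ.length)) wj :=
  net_voltage_shift_general φ v₀ ℓ hclosed j vj hsplit w₀ wj hw₀ hwj
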